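/- For the polynomial P_3(z) = z + (2/√5)z² + (1/2)(1 − 1/√5)z³ and every real t, one has |P_3(e^{it})| ≥ (3 − √5)/2, with equality when t = π. -/

import Mathlib

/-- The polynomial `P₃(z) = z + (2/√5)z² + (1/2)(1 − 1/√5)z³`. -/
noncomputable def P3 (z : ℂ) : ℂ :=
  z + ((2 / Real.sqrt 5 : ℝ) : ℂ) * z ^ 2 +
    (((1 / 2) * (1 - 1 / Real.sqrt 5) : ℝ) : ℂ) * z ^ 3

/-!
Factor `P₃(z) = z (1 + a z + b z²)` with `a = 2/√5`, `b = (1 - 1/√5)/2`. On the unit circle,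
`|1 + a z + b z²|²` is a quadratic in `x = Re z`, and writing it around `x = -1` gives
`(1 - a + b)² + 2 (x + 1) (a (1 + b) - 4 b + 2 b (x + 1))`. For these coefficients
`4 b ≤ a (1 + b)` (equivalently `11/5 ≤ √5`) and `b ≥ 0`, so the minimum is attained at `z = -1`,
where it equals `1 - a + b = (3 - √5)/2`.
-/

open Complex

lemma normSq_one_add_mul_add_mul_sq (a b : ℝ) {z : ℂ} (hz : ‖z‖ = 1) :
    normSq (1 + a * z + b * z ^ 2) =
      (1 - a + b) ^ 2 + 2 * (z.re + 1) * (a * (1 + b) - 4 * b + 2 * b * (z.re + 1)) := by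
  have hcircle : z.re * z.re + z.im * z.im = 1 := by
    rw [← normSq_apply, ← Complex.sq_norm, hz, one_pow]
  simp only [normSq_apply, add_re, add_im, mul_re, mul_im, ofReal_re, ofReal_im, one_re, one_im,
    pow_two]
  linear_combination
    (b ^ 2 * (z.re ^ 2 + z.im ^ 2 + 1) + a ^ 2 + 2 * a * b * z.re - 2 * b) * hcircle

lemma abs_one_sub_add_le_norm_one_add_mul_add_mul_sq {a b : ℝ} (hb : 0 ≤ b)
    (hab : 4 * b ≤ a * (1 + b)) {z : ℂ} (hz : ‖z‖ = 1) :
    |1 - a + b| ≤ ‖1 + a * z + b * z ^ 2‖ := by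
  have hre : 0 ≤ z.re + 1 := by
    linarith [neg_abs_le z.re, abs_re_le_norm z]
  have hsq : (1 - a + b) ^ 2 ≤ ‖1 + a * z + b * z ^ 2‖ ^ 2 := by
    rw [Complex.sq_norm, normSq_one_add_mul_add_mul_sq a b hz]
    have : 0 ≤ a * (1 + b) - 4 * b + 2 * b * (z.re + 1) := by nlinarith
    nlinarith
  exact (sq_le_sq.1 hsq).trans_eq (abs_norm _)

lemma P3_eq_mul (z : ℂ) :
    P3 z = z * (1 + ((2 / Real.sqrt 5 : ℝ) : ℂ) * z +
      (((1 / 2) * (1 - 1 / Real.sqrt 5) : ℝ) : ℂ) * z ^ 2) := by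
  unfold P3
  ring

lemma P3_cubic_coeff_nonneg : 0 ≤ (1 / 2) * (1 - 1 / Real.sqrt 5) := by
  have : 1 ≤ Real.sqrt 5 := Real.one_le_sqrt.2 (by norm_num)
  have : 1 / Real.sqrt 5 ≤ 1 := div_le_one_of_le₀ this (by positivity)
  linarith

lemma P3_four_mul_cubic_coeff_le : 4 * ((1 / 2) * (1 - 1 / Real.sqrt 5)) ≤
    2 / Real.sqrt 5 * (1 + (1 / 2) * (1 - 1 / Real.sqrt 5)) := by
  have hs : Real.sqrt 5 ^ 2 = 5 := Real.sq_sqrt (by norm_num)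
  have hpos : 0 < Real.sqrt 5 := by positivity
  have : 11 / 5 ≤ Real.sqrt 5 := by nlinarith
  field_simp
  nlinarith

lemma P3_one_sub_coeffs_eq : 1 - 2 / Real.sqrt 5 + (1 / 2) * (1 - 1 / Real.sqrt 5) =
    (3 - Real.sqrt 5) / 2 := by
  have hs : Real.sqrt 5 ^ 2 = 5 := Real.sq_sqrt (by norm_num)
  have hpos : 0 < Real.sqrt 5 := by positivity
  field_simp
  linear_combination hs

theorem stmt13 :
    (∀ t : ℝ, (3 - Real.sqrt 5) / 2 ≤ ‖P3 (Complex.exp (Complex.I * t))‖) ∧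
      ‖P3 (Complex.exp (Complex.I * Real.pi))‖ = (3 - Real.sqrt 5) / 2 := by
  have hmin : (3 - Real.sqrt 5) / 2 = |1 - 2 / Real.sqrt 5 + (1 / 2) * (1 - 1 / Real.sqrt 5)| := by
    rw [P3_one_sub_coeffs_eq, abs_of_nonneg]
    nlinarith [Real.sq_sqrt (show (0 : ℝ) ≤ 5 by norm_num), Real.sqrt_nonneg 5]
  refine ⟨fun t => ?_, ?_⟩
  · rw [P3_eq_mul, norm_mul, norm_exp_I_mul_ofReal, one_mul, hmin]
    exact abs_one_sub_add_le_norm_one_add_mul_add_mul_sq P3_cubic_coeff_nonneg P3_four_mul_cubic_coeff_le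
      (norm_exp_I_mul_ofReal t)
  · rw [mul_comm, exp_pi_mul_I, P3_eq_mul, hmin]
    rw [norm_mul, norm_neg, norm_one, one_mul, ← Real.norm_eq_abs, ← norm_real]
    push_cast
    congr 1
    ring
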